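/- arXiv:2304.03907 — 2 statements merged into one kernel-verified Lean document; each statement's English description precedes it below -/
import Mathlib

section
/- Let Q be defined by the Bellman equation Q^π = r + γ P^π Q^π for a Markov transition operator P^π and discount γ ∈ (0,1), and let Q̃^π be the fixed point of the projected Bellman equation Q̃^π = Π(r + γ P^π Q̃^π), where Π is the orthogonal projection in L²(ν) onto a closed subspace and ν is the stationary distribution of π. If P^π is a nonexpansion in L²(ν) (true when ν is stationary), then ‖Q^π - Q̃^π‖_ν ≤ (1/(1-γ)) ‖Q^π - Π Q^π‖_ν. -/
/-! `Q̃` is the fixed point of the composite `Π ∘ T`, a `γ`-contraction because `Π` is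
nonexpansive, and `Π Q = Π (T Q)`. So `Q` moves by `‖Q - Π Q‖` under `Π ∘ T`, and the a-priori
estimate for contractions, `d(x, x*) ≤ d(x, f x) / (1 - γ)`, gives the bound. -/

open NNReal Function

theorem ContractingWith.dist_le_of_isFixedPt_comp {α : Type*} [MetricSpace α] {K : ℝ≥0}
    {T proj : α → α} (hT : ContractingWith K T) (hproj : LipschitzWith 1 proj) {Q Q' : α}
    (hQ : IsFixedPt T Q) (hQ' : IsFixedPt (proj ∘ T) Q') :
    dist Q Q' ≤ dist Q (proj Q) / (1 - K) := by
  have hcomp : ContractingWith K (proj ∘ T) := ⟨hT.1, by simpa using hproj.comp hT.2⟩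
  simpa only [comp_apply, hQ.eq] using hcomp.dist_le_of_fixedPoint Q hQ'

theorem contractingWith_const_add_smul {V : Type*} [NormedAddCommGroup V] [NormedSpace ℝ V]
    (r : V) {γ : ℝ} (hγ0 : 0 ≤ γ) (hγ1 : γ < 1) {P : V →ₗ[ℝ] V}
    (hP : ∀ f, ‖P f‖ ≤ ‖f‖) :
    ContractingWith (Real.toNNReal γ) (fun f => r + γ • P f) := by
  refine ⟨by simpa using hγ1, LipschitzWith.of_dist_le_mul fun f g => ?_⟩
  rw [dist_eq_norm, dist_eq_norm, Real.coe_toNNReal _ hγ0, add_sub_add_left_eq_sub, ← smul_sub,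
    ← map_sub, norm_smul, Real.norm_of_nonneg hγ0]
  exact mul_le_mul_of_nonneg_left (hP _) hγ0

/-- projected Bellman equation approximation bound
(Tsitsiklis–Van Roy / Yu–Bertsekas): `‖Q - Q̃‖ ≤ (1/(1-γ)) ‖Q - Π Q‖` in `L²(ν)`. -/
theorem stmt_9 {V : Type*} [NormedAddCommGroup V] [NormedSpace ℝ V]
    (γ : ℝ) (hγ : γ ∈ Set.Ioo (0 : ℝ) 1)
    (P Pi : V →ₗ[ℝ] V)
    (hPnonexp : ∀ f : V, ‖P f‖ ≤ ‖f‖)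
    (hPinonexp : ∀ f : V, ‖Pi f‖ ≤ ‖f‖)
    (r Q Qtil : V)
    (hQ : Q = r + γ • P Q)
    (hQtil : Qtil = Pi (r + γ • P Qtil)) :
    ‖Q - Qtil‖ ≤ (1 / (1 - γ)) * ‖Q - Pi Q‖ := by
  obtain ⟨hγ0, hγ1⟩ := hγ
  have hT := contractingWith_const_add_smul r hγ0.le hγ1 hPnonexp
  have hPi : LipschitzWith 1 Pi := by
    simpa using AddMonoidHomClass.lipschitz_of_bound Pi 1 (by simpa using hPinonexp)
  have hdist := hT.dist_le_of_isFixedPt_comp hPi hQ.symm hQtil.symm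
  rwa [dist_eq_norm, dist_eq_norm, Real.coe_toNNReal _ hγ0.le, div_eq_inv_mul, ← one_div] at hdist
end

section
/- Let k be a positive definite kernel with 0 ≤ k(x,x) ≤ 1 for all x, and let k̂ be any function satisfying 0 ≤ k̂(x,x) ≤ k(x,x) pointwise on the diagonal (e.g., a Nyström projection approximation). Let X^n = {x₁,…,xₙ} be sample points with Gram matrix K^(n) = UΛUᵀ, eigenvalues λ₁ ≥ … ≥ λₙ, and k̂ = k̂_m the rank-m Nyström approximation built from X^n. Then (1/n)∑_{i=1}^n √((k - k̂_m)(x_i, x_i)) ≤ √((1/n)∑_{i>m} λ_i). -/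
open scoped RealInnerProductSpace

/-- diagonal Nyström residual bound:
`(1/n)∑ᵢ √((k - k̂_m)(xᵢ,xᵢ)) ≤ √((1/n)∑_{i>m} λᵢ)`. -/
theorem stmt_16 {H X : Type*} [NormedAddCommGroup H] [InnerProductSpace ℝ H]
    (Φ : X → H) (k : X → X → ℝ) (hk : ∀ x y, k x y = ⟪Φ x, Φ y⟫)
    (hkdiag : ∀ x, 0 ≤ k x x ∧ k x x ≤ 1)
    {n m : ℕ} (hn : 0 < n) (hm : m ≤ n) (xs : Fin n → X)
    (u : Fin n → Fin n → ℝ) (lam : Fin n → ℝ)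
    (horth : ∀ i j, ∑ s, u i s * u j s = if i = j then (1 : ℝ) else 0)
    (hpos : ∀ i, 0 < lam i)
    (hsorted : ∀ i j : Fin n, i ≤ j → lam j ≤ lam i)
    (heig : ∀ i, (Matrix.of fun r s => k (xs r) (xs s)).mulVec (u i) = lam i • u i)
    (khat : X → X → ℝ)
    (hkhat : ∀ x y, khat x y =
      ∑ i ∈ Finset.univ.filter (fun i : Fin n => (i : ℕ) < m),
        (lam i)⁻¹ * (∑ r, k x (xs r) * u i r) * (∑ s, u i s * k (xs s) y))
    (hkhatdiag : ∀ x, 0 ≤ khat x x ∧ khat x x ≤ k x x) :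
    (n : ℝ)⁻¹ * ∑ i, Real.sqrt (k (xs i) (xs i) - khat (xs i) (xs i)) ≤
      Real.sqrt ((n : ℝ)⁻¹ *
        ∑ i ∈ Finset.univ.filter (fun i : Fin n => m ≤ (i : ℕ)), lam i) := by
  classical
  have hsym : ∀ x y, k x y = k y x := fun x y => by rw [hk, hk, real_inner_comm]
  -- columns of U are orthonormal since rows are
  have hcol : ∀ s t : Fin n, ∑ i, u i s * u i t = if s = t then (1 : ℝ) else 0 := by
    set U : Matrix (Fin n) (Fin n) ℝ := Matrix.of u with hU
    have h1 : U * U.transpose = 1 := by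
      ext i j
      simpa [Matrix.mul_apply, hU, Matrix.one_apply] using horth i j
    have h2 : U.transpose * U = 1 := mul_eq_one_comm.mp h1
    intro s t
    have := congrFun (congrFun h2 s) t
    simpa [Matrix.mul_apply, hU, Matrix.one_apply] using this
  -- eigen equation entrywise
  have heig' : ∀ i t, ∑ s, k (xs t) (xs s) * u i s = lam i * u i t := by
    intro i t
    have := congrFun (heig i) t
    simpa [Matrix.mulVec, dotProduct] using this
  -- trace identity
  have hdiag : ∀ t, k (xs t) (xs t) = ∑ i, lam i * (u i t * u i t) := by
    intro t
    calc k (xs t) (xs t)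
        = ∑ s, k (xs t) (xs s) * (if s = t then (1 : ℝ) else 0) := by simp
      _ = ∑ s, k (xs t) (xs s) * (∑ i, u i s * u i t) := by
          refine Finset.sum_congr rfl fun s _ => ?_
          rw [hcol s t]
      _ = ∑ s, ∑ i, k (xs t) (xs s) * (u i s * u i t) := by
          simp [Finset.mul_sum]
      _ = ∑ i, ∑ s, k (xs t) (xs s) * (u i s * u i t) := Finset.sum_comm
      _ = ∑ i, lam i * (u i t * u i t) := by
          refine Finset.sum_congr rfl fun i _ => ?_
          calc ∑ s, k (xs t) (xs s) * (u i s * u i t)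
              = (∑ s, k (xs t) (xs s) * u i s) * u i t := by
                rw [Finset.sum_mul]; refine Finset.sum_congr rfl fun s _ => by ring
            _ = lam i * (u i t * u i t) := by rw [heig' i t]; ring
  have htrace : ∑ t, k (xs t) (xs t) = ∑ i, lam i := by
    calc ∑ t, k (xs t) (xs t) = ∑ t, ∑ i, lam i * (u i t * u i t) := by
          exact Finset.sum_congr rfl fun t _ => hdiag t
      _ = ∑ i, ∑ t, lam i * (u i t * u i t) := Finset.sum_comm
      _ = ∑ i, lam i := by
          refine Finset.sum_congr rfl fun i _ => ?_
          rw [← Finset.mul_sum, horth i i]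
          simp
  -- khat diagonal at sample points
  have hkh : ∀ t, khat (xs t) (xs t) =
      ∑ i ∈ Finset.univ.filter (fun i : Fin n => (i : ℕ) < m), lam i * (u i t * u i t) := by
    intro t
    rw [hkhat]
    refine Finset.sum_congr rfl fun i _ => ?_
    have h1 : ∑ r, k (xs t) (xs r) * u i r = lam i * u i t := heig' i t
    have h2 : ∑ s, u i s * k (xs s) (xs t) = lam i * u i t := by
      rw [← h1]
      refine Finset.sum_congr rfl fun s _ => ?_
      rw [hsym (xs s) (xs t)]; ring
    rw [h1, h2]
    have hne : lam i ≠ 0 := (hpos i).ne'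
    field_simp
  have hkhsum : ∑ t, khat (xs t) (xs t) =
      ∑ i ∈ Finset.univ.filter (fun i : Fin n => (i : ℕ) < m), lam i := by
    calc ∑ t, khat (xs t) (xs t)
        = ∑ t, ∑ i ∈ Finset.univ.filter (fun i : Fin n => (i : ℕ) < m),
            lam i * (u i t * u i t) := Finset.sum_congr rfl fun t _ => hkh t
      _ = ∑ i ∈ Finset.univ.filter (fun i : Fin n => (i : ℕ) < m),
            ∑ t, lam i * (u i t * u i t) := Finset.sum_comm
      _ = _ := by
          refine Finset.sum_congr rfl fun i _ => ?_
          rw [← Finset.mul_sum, horth i i]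
          simp
  -- sum of residuals is the tail
  have hsplit : (∑ i ∈ Finset.univ.filter (fun i : Fin n => (i : ℕ) < m), lam i) +
      (∑ i ∈ Finset.univ.filter (fun i : Fin n => m ≤ (i : ℕ)), lam i) = ∑ i, lam i := by
    have := Finset.sum_filter_add_sum_filter_not (Finset.univ : Finset (Fin n))
      (fun i : Fin n => (i : ℕ) < m) lam
    simpa [not_lt] using this
  have hres : ∑ t, (k (xs t) (xs t) - khat (xs t) (xs t)) =
      ∑ i ∈ Finset.univ.filter (fun i : Fin n => m ≤ (i : ℕ)), lam i := by
    rw [Finset.sum_sub_distrib, htrace, hkhsum, ← hsplit]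
    ring
  -- Cauchy-Schwarz
  set d : Fin n → ℝ := fun t => k (xs t) (xs t) - khat (xs t) (xs t) with hd
  have hdnn : ∀ t, 0 ≤ d t := fun t => sub_nonneg.2 (hkhatdiag (xs t)).2
  have hcs : ∑ t, Real.sqrt (d t) ≤
      Real.sqrt (n : ℝ) * Real.sqrt (∑ t, d t) := by
    have := Real.sum_sqrt_mul_sqrt_le (Finset.univ : Finset (Fin n))
      (f := fun _ => (1 : ℝ)) (g := d) (fun _ => zero_le_one) hdnn
    simpa using this
  have hnpos : (0 : ℝ) < n := Nat.cast_pos.mpr hn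
  have hS : ∑ t, d t = ∑ i ∈ Finset.univ.filter (fun i : Fin n => m ≤ (i : ℕ)), lam i := hres
  calc (n : ℝ)⁻¹ * ∑ t, Real.sqrt (d t)
      ≤ (n : ℝ)⁻¹ * (Real.sqrt (n : ℝ) * Real.sqrt (∑ t, d t)) := by
        exact mul_le_mul_of_nonneg_left hcs (by positivity)
    _ = Real.sqrt ((n : ℝ)⁻¹ * ∑ t, d t) := by
        have hsq : Real.sqrt (n : ℝ) * Real.sqrt (n : ℝ) = (n : ℝ) :=
          Real.mul_self_sqrt hnpos.le
        have hsp : (0 : ℝ) < Real.sqrt (n : ℝ) := Real.sqrt_pos.mpr hnpos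
        have h3 : (n : ℝ)⁻¹ * Real.sqrt (n : ℝ) = (Real.sqrt (n : ℝ))⁻¹ := by
          field_simp
          exact Real.sq_sqrt hnpos.le
        rw [Real.sqrt_mul (by positivity), Real.sqrt_inv, ← mul_assoc, h3]
    _ = Real.sqrt ((n : ℝ)⁻¹ *
        ∑ i ∈ Finset.univ.filter (fun i : Fin n => m ≤ (i : ℕ)), lam i) := by rw [hS]
end
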